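/- If an elliptic function f is summable, then ores(f, β, j) = 0 for every β ∈ ℂ and every integer j ≥ 1. -/

import Mathlib

/-!
Near every point `f z = g (z + s) - g z`, so `c_j(f, α) = c_j(g, α + s) - c_j(g, α)` and the
orbital residue is the telescoping sum over `n ∈ ℤ` of the differences of `b n = c_j(g, β + n s)`.
It vanishes because `b` has finite support: `c_j(g, ·)` is `Λ`-periodic and zero off the poles
of `g`; reducing the orbit `β + n s` modulo `Λ` into a compact set gives pairwise distinct points
since `s` is non-torsion, and a compact set contains only finitely many poles.
-/

open Complex

noncomputable section

/-- The lattice generated by two complex numbers. -/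
def latticeGen (l1 l2 : ℂ) : Set ℂ := {z : ℂ | ∃ m n : ℤ, z = (m : ℂ) * l1 + (n : ℂ) * l2}

/-- `f` is elliptic with respect to `Λ`: meromorphic on all of `ℂ` and `Λ`-periodic at
every point of analyticity. -/
def IsElliptic (Λ : Set ℂ) (f : ℂ → ℂ) : Prop :=
  (∀ z : ℂ, MeromorphicAt f z) ∧
    ∀ lam ∈ Λ, ∀ z : ℂ, AnalyticAt ℂ f z → f (z + lam) = f z

/-- The Weierstrass zeta function of the lattice `Λ`. -/
def wzeta (Λ : Set ℂ) (z : ℂ) : ℂ :=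
  1 / z + ∑' l : {l : ℂ // l ∈ Λ ∧ l ≠ 0},
    (1 / (z - (l : ℂ)) + 1 / (l : ℂ) + z / (l : ℂ) ^ 2)

/-- The coefficient of `(z - α)⁻ʲ` in the Laurent expansion of `f` at `α`, computed as the
limit, as `ε → 0⁺`, of `(2πi)⁻¹ ∮_{|z-α|=ε} f(z) (z-α)^(j-1) dz`. -/
def laurentCoeff (f : ℂ → ℂ) (α : ℂ) (j : ℕ) : ℂ :=
  Filter.limUnder (nhdsWithin (0 : ℝ) (Set.Ioi 0)) fun ε : ℝ =>
    (2 * (Real.pi : ℂ) * Complex.I)⁻¹ * ∮ z in C(α, ε), f z * (z - α) ^ (j - 1)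

/-- `p` is a pole of `f`: `f` is meromorphic at `p` with nonzero principal part. -/
def IsPole (f : ℂ → ℂ) (p : ℂ) : Prop :=
  MeromorphicAt f p ∧ ∃ j : ℕ, 1 ≤ j ∧ laurentCoeff f p j ≠ 0

/-- `f` is summable with respect to the shift by `s`. -/
def IsSummableE (Λ : Set ℂ) (s : ℂ) (f : ℂ → ℂ) : Prop :=
  ∃ g : ℂ → ℂ, IsElliptic Λ g ∧
    ∀ z : ℂ, AnalyticAt ℂ g z → AnalyticAt ℂ g (z + s) → f z = g (z + s) - g z

/-- The orbital residue of `f` at `β` of order `j`. -/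
def ores (s : ℂ) (f : ℂ → ℂ) (β : ℂ) (j : ℕ) : ℂ :=
  ∑' n : ℤ, laurentCoeff f (β + (n : ℂ) * s) j

end

open Metric Filter Set Topology

noncomputable def circleLaurentCoeff (f : ℂ → ℂ) (α : ℂ) (j : ℕ) (ε : ℝ) : ℂ :=
  (2 * (Real.pi : ℂ) * Complex.I)⁻¹ * ∮ z in C(α, ε), f z * (z - α) ^ (j - 1)

theorem laurentCoeff_eq_limUnder (f : ℂ → ℂ) (α : ℂ) (j : ℕ) :
    laurentCoeff f α j = limUnder (𝓝[>] 0) (circleLaurentCoeff f α j) :=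
  rfl

theorem eventually_nhdsGT_forall_mem_sphere {p : ℂ → Prop} {α : ℂ}
    (h : ∀ᶠ z in 𝓝[≠] α, p z) : ∀ᶠ ε in 𝓝[>] (0 : ℝ), ∀ z ∈ sphere α ε, p z := by
  obtain ⟨R, hR, hball⟩ := Metric.mem_nhdsWithin_iff.1 h
  filter_upwards [Ioo_mem_nhdsGT hR] with ε hε z hz
  exact hball ⟨mem_ball.2 ((mem_sphere.1 hz).trans_lt hε.2), ne_of_mem_sphere hz hε.1.ne'⟩

theorem circleLaurentCoeff_comp_add_right (f : ℂ → ℂ) (α t : ℂ) (j : ℕ) (ε : ℝ) :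
    circleLaurentCoeff (fun z => f (z + t)) α j ε = circleLaurentCoeff f (α + t) j ε := by
  have hmap : ∀ θ, circleMap (α + t) ε θ = circleMap α ε θ + t := fun θ => by
    simp only [circleMap]; ring
  simp only [circleLaurentCoeff, circleIntegral, deriv_circleMap, hmap, smul_eq_mul,
    add_sub_add_right_eq_sub]

theorem laurentCoeff_comp_add_right (f : ℂ → ℂ) (α t : ℂ) (j : ℕ) :
    laurentCoeff (fun z => f (z + t)) α j = laurentCoeff f (α + t) j := by
  simp only [laurentCoeff_eq_limUnder, funext (circleLaurentCoeff_comp_add_right f α t j)]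

theorem laurentCoeff_congr {f g : ℂ → ℂ} {α : ℂ} (h : f =ᶠ[𝓝[≠] α] g) (j : ℕ) :
    laurentCoeff f α j = laurentCoeff g α j := by
  have hcircle : circleLaurentCoeff f α j =ᶠ[𝓝[>] 0] circleLaurentCoeff g α j := by
    filter_upwards [self_mem_nhdsWithin, eventually_nhdsGT_forall_mem_sphere h] with ε hε hfg
    simp only [circleLaurentCoeff]
    congr 1
    exact circleIntegral.integral_congr (le_of_lt hε) fun z hz => by simp only [hfg z hz]
  simp only [laurentCoeff_eq_limUnder, limUnder, map_congr hcircle]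

theorem circleIntegral_eq_of_analyticAt_punctured {F : ℂ → ℂ} {α : ℂ} {R r r' : ℝ}
    (hF : ∀ z ∈ ball α R \ {α}, AnalyticAt ℂ F z) (hr : 0 < r) (hr' : r' < R) (hrr' : r ≤ r') :
    (∮ z in C(α, r'), F z) = ∮ z in C(α, r), F z := by
  have hannulus : closedBall α r' \ ball α r ⊆ ball α R \ {α} := fun z hz =>
    ⟨closedBall_subset_ball hr' hz.1, fun hzα => hz.2 (hzα ▸ mem_ball_self hr)⟩
  refine circleIntegral_eq_of_differentiable_on_annulus_off_countable hr hrr' countable_empty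
    (fun z hz => (hF z (hannulus hz)).continuousAt.continuousWithinAt) fun z hz => ?_
  exact (hF z (hannulus (sdiff_subset_sdiff ball_subset_closedBall ball_subset_closedBall
    hz.1))).differentiableAt

theorem eventually_circleLaurentCoeff_eq {f : ℂ → ℂ} {α : ℂ}
    (hf : ∀ᶠ z in 𝓝[≠] α, AnalyticAt ℂ f z) (j : ℕ) :
    ∀ᶠ ε in 𝓝[>] 0, circleLaurentCoeff f α j ε = laurentCoeff f α j := by
  obtain ⟨R, hR, hball⟩ := Metric.mem_nhdsWithin_iff.1 hf
  have hF : ∀ z ∈ ball α R \ {α}, AnalyticAt ℂ (fun z => f z * (z - α) ^ (j - 1)) z :=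
    fun z hz => (hball hz).mul (by fun_prop)
  have hconst : ∀ r ∈ Ioo 0 R, circleLaurentCoeff f α j r = circleLaurentCoeff f α j (R / 2) := by
    intro r hr
    simp only [circleLaurentCoeff]
    rcases le_total r (R / 2) with h | h
    · rw [circleIntegral_eq_of_analyticAt_punctured hF hr.1 (half_lt_self hR) h]
    · rw [circleIntegral_eq_of_analyticAt_punctured hF (half_pos hR) hr.2 h]
  have hlim : laurentCoeff f α j = circleLaurentCoeff f α j (R / 2) :=
    tendsto_const_nhds.congr' (by
      filter_upwards [Ioo_mem_nhdsGT hR] with r hr using (hconst r hr).symm) |>.limUnder_eq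
  filter_upwards [Ioo_mem_nhdsGT hR] with r hr
  rw [hlim, hconst r hr]

theorem laurentCoeff_eq_zero_of_analyticAt {f : ℂ → ℂ} {α : ℂ} (hf : AnalyticAt ℂ f α)
    (j : ℕ) : laurentCoeff f α j = 0 := by
  obtain ⟨R, hR, hball⟩ := Metric.eventually_nhds_iff_ball.1 hf.eventually_analyticAt
  have hdiff : DifferentiableOn ℂ (fun z => f z * (z - α) ^ (j - 1)) (ball α R) :=
    fun z hz => ((hball z hz).mul (by fun_prop)).differentiableAt.differentiableWithinAt
  have hzero : ∀ᶠ ε in 𝓝[>] 0, circleLaurentCoeff f α j ε = 0 := by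
    filter_upwards [Ioo_mem_nhdsGT hR] with ε hε
    rw [circleLaurentCoeff, (hdiff.diffContOnCl_ball (closedBall_subset_ball hε.2)
      ).circleIntegral_eq_zero hε.1.le, mul_zero]
  obtain ⟨ε, hε₁, hε₂⟩ := (hzero.and (eventually_circleLaurentCoeff_eq
    (hf.eventually_analyticAt.filter_mono nhdsWithin_le_nhds) j)).exists
  exact hε₂.symm.trans hε₁

theorem laurentCoeff_sub {f g : ℂ → ℂ} {α : ℂ} (hf : ∀ᶠ z in 𝓝[≠] α, AnalyticAt ℂ f z)
    (hg : ∀ᶠ z in 𝓝[≠] α, AnalyticAt ℂ g z) (j : ℕ) :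
    laurentCoeff (fun z => f z - g z) α j = laurentCoeff f α j - laurentCoeff g α j := by
  have hfg : ∀ᶠ z in 𝓝[≠] α, AnalyticAt ℂ (fun z => f z - g z) z :=
    (hf.and hg).mono fun z h => h.1.sub h.2
  obtain ⟨ε, hε, hsphere, hεf, hεg, hεfg⟩ := ((eventually_mem_nhdsWithin (s := Ioi (0 : ℝ))).and
    ((eventually_nhdsGT_forall_mem_sphere (hf.and hg)).and
    ((eventually_circleLaurentCoeff_eq hf j).and ((eventually_circleLaurentCoeff_eq hg j).and
    (eventually_circleLaurentCoeff_eq hfg j))))).exists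
  have hint : ∀ h : ℂ → ℂ, (∀ z ∈ sphere α ε, AnalyticAt ℂ h z) →
      CircleIntegrable (fun z => h z * (z - α) ^ (j - 1)) α ε := fun h hh =>
    ContinuousOn.circleIntegrable (le_of_lt hε) fun z hz =>
      ((hh z hz).mul (by fun_prop)).continuousAt.continuousWithinAt
  rw [← hεfg, ← hεf, ← hεg]
  simp only [circleLaurentCoeff, sub_mul]
  rw [circleIntegral.integral_sub (hint f fun z hz => (hsphere z hz).1)
    (hint g fun z hz => (hsphere z hz).2), mul_sub]

theorem laurentCoeff_eq_sub_of_eq_sub_comp_add {f g : ℂ → ℂ} {s : ℂ}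
    (hg : ∀ z, MeromorphicAt g z)
    (hfg : ∀ z, AnalyticAt ℂ g z → AnalyticAt ℂ g (z + s) → f z = g (z + s) - g z)
    (α : ℂ) (j : ℕ) : laurentCoeff f α j = laurentCoeff g (α + s) j - laurentCoeff g α j := by
  have hshift : MeromorphicAt (fun z => g (z + s)) α :=
    meromorphicAt_fun_comp_add_const_iff_meromorphicAt.2 (hg (α + s))
  have hgs : ∀ᶠ z in 𝓝[≠] α, AnalyticAt ℂ g (z + s) :=
    (show Tendsto (· + s) (𝓝[≠] α) (𝓝[≠] (α + s)) from
      ((Homeomorph.addRight s).map_punctured_nhds_eq α).le).eventually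
      (hg (α + s)).eventually_analyticAt
  have hfg' : f =ᶠ[𝓝[≠] α] fun z => g (z + s) - g z := by
    filter_upwards [(hg α).eventually_analyticAt, hgs] with z h₁ h₂ using hfg z h₁ h₂
  rw [laurentCoeff_congr hfg', laurentCoeff_sub hshift.eventually_analyticAt
    (hg α).eventually_analyticAt, laurentCoeff_comp_add_right]

theorem IsElliptic.laurentCoeff_add {Λ : Set ℂ} {g : ℂ → ℂ} (hg : IsElliptic Λ g) {l : ℂ}
    (hl : l ∈ Λ) (x : ℂ) (j : ℕ) : laurentCoeff g (x + l) j = laurentCoeff g x j := by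
  rw [← laurentCoeff_comp_add_right]
  exact laurentCoeff_congr ((hg.1 x).eventually_analyticAt.mono fun z hz => hg.2 l hl z hz) j

theorem mem_latticeGen_iff {l1 l2 z : ℂ} :
    z ∈ latticeGen l1 l2 ↔ z ∈ Submodule.span ℤ {l1, l2} := by
  simp [latticeGen, Submodule.mem_span_pair, eq_comm]

theorem linearIndependent_of_div_ne_ofReal {l1 l2 : ℂ} (h : ∀ r : ℝ, l1 / l2 ≠ r) :
    LinearIndependent ℝ ![l1, l2] := by
  have hl2 : l2 ≠ 0 := fun h0 => h 0 (by simp [h0])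
  refine linearIndependent_fin2.2 ⟨by simpa using hl2, fun a ha => h a ?_⟩
  simp only [Matrix.cons_val_one, Matrix.cons_val_zero] at ha
  rw [← ha, Complex.real_smul, mul_div_cancel_right₀ _ hl2]

theorem exists_isCompact_forall_sub_mem_latticeGen {l1 l2 : ℂ}
    (hind : LinearIndependent ℝ ![l1, l2]) :
    ∃ K : Set ℂ, IsCompact K ∧ ∀ x, ∃ l ∈ latticeGen l1 l2, x - l ∈ K := by
  let L : PeriodPair := ⟨l1, l2, hind⟩
  refine ⟨closure (ZSpan.fundamentalDomain L.basis),
    (ZSpan.fundamentalDomain_isBounded _).isCompact_closure,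
    fun x => ⟨ZSpan.floor L.basis x, ?_, subset_closure (ZSpan.fract_mem_fundamentalDomain _ x)⟩⟩
  have hfloor : (ZSpan.floor L.basis x : ℂ) ∈ L.lattice := by
    rw [L.lattice_eq_span_range_basis]
    exact (ZSpan.floor L.basis x).2
  exact mem_latticeGen_iff.2 hfloor

theorem eq_zero_of_intCast_mul_mem_latticeGen {l1 l2 s : ℂ}
    (hs : ∀ a b : ℚ, s ≠ a * l1 + b * l2) {n : ℤ} (h : (n : ℂ) * s ∈ latticeGen l1 l2) :
    n = 0 := by
  obtain ⟨p, q, hpq⟩ := h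
  by_contra hn
  have hn' : (n : ℂ) ≠ 0 := by exact_mod_cast hn
  apply hs (p / n) (q / n)
  push_cast
  field_simp
  linear_combination hpq

theorem IsElliptic.finite_support_laurentCoeff_orbit {l1 l2 s : ℂ} {g : ℂ → ℂ}
    (hg : IsElliptic (latticeGen l1 l2) g) (hind : LinearIndependent ℝ ![l1, l2])
    (hs : ∀ a b : ℚ, s ≠ a * l1 + b * l2) (β : ℂ) (j : ℕ) :
    (fun n : ℤ => laurentCoeff g (β + n * s) j).support.Finite := by
  obtain ⟨K, hK, hKΛ⟩ := exists_isCompact_forall_sub_mem_latticeGen hind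
  choose l hl hlK using fun n : ℤ => hKΛ (β + n * s)
  have hsing : (K \ {z | AnalyticAt ℂ g z}).Finite :=
    hK.finite_sdiff_of_mem_codiscreteWithin
      (MeromorphicOn.eventually_codiscreteWithin_analyticAt g fun x _ => hg.1 x)
  refine Finite.of_finite_image (f := fun n : ℤ => β + n * s - l n) (hsing.subset ?_) ?_
  · rintro _ ⟨n, hn, rfl⟩
    refine ⟨hlK n, fun han => hn ?_⟩
    change laurentCoeff g (β + n * s) j = 0
    rw [← sub_add_cancel (β + n * s) (l n), hg.laurentCoeff_add (hl n)]
    exact laurentCoeff_eq_zero_of_analyticAt han j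
  · intro m _ n _ hmn
    have hsub : l m - l n = ((m - n : ℤ) : ℂ) * s := by
      dsimp only at hmn
      push_cast
      linear_combination -hmn
    have hmem : ((m - n : ℤ) : ℂ) * s ∈ latticeGen l1 l2 := hsub ▸ mem_latticeGen_iff.2
      (sub_mem (mem_latticeGen_iff.1 (hl m)) (mem_latticeGen_iff.1 (hl n)))
    exact sub_eq_zero.1 (eq_zero_of_intCast_mul_mem_latticeGen hs hmem)

theorem tsum_int_sub_shift_eq_zero {M : Type*} [AddCommGroup M] [TopologicalSpace M]
    [IsTopologicalAddGroup M] [T2Space M] {b : ℤ → M} (hb : b.support.Finite) :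
    ∑' n, (b (n + 1) - b n) = 0 := by
  have hsum : Summable b := summable_of_hasFiniteSupport hb
  have hsum_shift : Summable fun n : ℤ => b (n + 1) := (Equiv.addRight (1 : ℤ)).summable_iff.2 hsum
  rw [hsum_shift.tsum_sub hsum, sub_eq_zero]
  exact (Equiv.addRight 1).tsum_eq b

theorem statement4_general (l1 l2 s : ℂ)
    (hratio : ∀ r : ℝ, l1 / l2 ≠ (r : ℂ))
    (hs : ∀ a b : ℚ, s ≠ (a : ℂ) * l1 + (b : ℂ) * l2)
    (f : ℂ → ℂ)
    (hsum : IsSummableE (latticeGen l1 l2) s f) :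
    ∀ β : ℂ, ∀ j : ℕ, 1 ≤ j → ores s f β j = 0 := by
  intro β j _
  obtain ⟨g, hg, hfg⟩ := hsum
  have htelescope : ∀ n : ℤ, laurentCoeff f (β + n * s) j =
      laurentCoeff g (β + (n + 1 : ℤ) * s) j - laurentCoeff g (β + n * s) j := fun n => by
    rw [laurentCoeff_eq_sub_of_eq_sub_comp_add hg.1 hfg, Int.cast_add, Int.cast_one, add_one_mul,
      add_assoc]
  rw [ores, tsum_congr htelescope]
  exact tsum_int_sub_shift_eq_zero
    (hg.finite_support_laurentCoeff_orbit (linearIndependent_of_div_ne_ofReal hratio) hs β j)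

/-- if an elliptic function is summable then all its orbital residues vanish. -/
theorem statement4 (l1 l2 s : ℂ) (hl1 : l1 ≠ 0) (hl2 : l2 ≠ 0)
    (hratio : ∀ r : ℝ, l1 / l2 ≠ (r : ℂ))
    (hs : ∀ a b : ℚ, s ≠ (a : ℂ) * l1 + (b : ℂ) * l2)
    (f : ℂ → ℂ) (hf : IsElliptic (latticeGen l1 l2) f)
    (hsum : IsSummableE (latticeGen l1 l2) s f) :
    ∀ β : ℂ, ∀ j : ℕ, 1 ≤ j → ores s f β j = 0 :=
  statement4_general l1 l2 s hratio hs f hsum
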